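/- arXiv:1011.0649 — 4 statements merged into one kernel-verified Lean document; each statement's English description precedes it below -/
import Mathlib

section
/- Let R be a (possibly noncommutative) ring and let a₁,…,aₙ be central elements of R such that aᵢ − aⱼ is not a zero divisor for all i ≠ j. If each linear polynomial t − aᵢ divides a polynomial h ∈ R[t], then the product ∏ᵢ (t − aᵢ) divides h in R[t]. -/
open Polynomial

private lemma eval_mul_central {R : Type*} [Ring R] {a : R} (ha : a ∈ Set.center R)
    (p q : R[X]) : (p * q).eval a = p.eval a * q.eval a := by
  simpa using eval₂_mul_noncomm (RingHom.id R) a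
    (p := p) (q := q) (fun k => ((Set.mem_center_iff.mp ha).comm (q.coeff k)).symm)

private lemma dvd_iff_eval_central {R : Type*} [Ring R] [Nontrivial R] {a : R}
    (ha : a ∈ Set.center R) (p : R[X]) : (X - C a) ∣ p ↔ p.eval a = 0 := by
  constructor
  · rintro ⟨q, rfl⟩
    rw [eval_mul_central ha]
    simp
  · intro hp
    rw [← modByMonic_eq_zero_iff_dvd (monic_X_sub_C a)]
    have hmod := p.modByMonic_add_div (X - C a)
    have hdeg : (p %ₘ (X - C a)).degree < 1 := by
      simpa [degree_X_sub_C] using degree_modByMonic_lt p (monic_X_sub_C a)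
    have hle : (p %ₘ (X - C a)).degree ≤ 0 := by
      exact_mod_cast Nat.WithBot.lt_one_iff_le_zero.mp hdeg
    have hC : p %ₘ (X - C a) = C ((p %ₘ (X - C a)).coeff 0) := eq_C_of_degree_le_zero hle
    have heval : (p %ₘ (X - C a)).eval a = 0 := by
      have := congrArg (Polynomial.eval a) hmod
      rw [eval_add, eval_mul_central ha] at this
      simp only [eval_sub, eval_X, eval_C, sub_self, zero_mul, zero_add] at this
      simpa [hp] using this
    rw [hC, eval_C] at heval
    rw [hC, heval, map_zero]

/-- Let `R` be a possibly noncommutative ring and `a₁, …, aₙ` central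
elements of `R` such that `aᵢ - aⱼ` is a non-zero-divisor for all `i ≠ j`.  If each
linear polynomial `t - aᵢ` divides `h ∈ R[t]`, then the product `∏ᵢ (t - aᵢ)`
divides `h` in `R[t]`. -/
theorem stmt0 {R : Type*} [Ring R] (n : ℕ) (a : Fin n → R)
    (hcentral : ∀ i, a i ∈ Set.center R)
    (hnzd : ∀ i j, i ≠ j → (a i - a j) ∈ nonZeroDivisors R)
    (h : Polynomial R)
    (hdvd : ∀ i, (Polynomial.X - Polynomial.C (a i)) ∣ h) :
    (List.ofFn fun i => Polynomial.X - Polynomial.C (a i)).prod ∣ h := by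
  rcases subsingleton_or_nontrivial R with hR | hR
  · exact ⟨0, Subsingleton.elim _ _⟩
  induction n generalizing h with
  | zero => simp
  | succ n ih =>
    obtain ⟨q, hq⟩ := hdvd 0
    have hq' : ∀ i : Fin n, (X - C (a i.succ)) ∣ q := by
      intro i
      rw [dvd_iff_eval_central (hcentral i.succ)]
      have h0 : h.eval (a i.succ) = 0 :=
        (dvd_iff_eval_central (hcentral i.succ) h).mp (hdvd i.succ)
      rw [hq, eval_mul_central (hcentral i.succ)] at h0
      simp only [eval_sub, eval_X, eval_C] at h0
      have hcomm : (a i.succ - a 0) * q.eval (a i.succ)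
          = q.eval (a i.succ) * (a i.succ - a 0) := by
        have h1 := Set.mem_center_iff.mp (hcentral i.succ)
        have h2 := Set.mem_center_iff.mp (hcentral 0)
        rw [sub_mul, mul_sub, h1.comm, h2.comm]
      rw [hcomm] at h0
      exact (mul_right_mem_nonZeroDivisors_eq_zero_iff (hnzd i.succ 0 (Fin.succ_ne_zero i))).mp h0
    have := ih (fun i => a i.succ) (fun i => hcentral i.succ)
      (fun i j hij => hnzd i.succ j.succ (fun e => hij (Fin.succ_injective n e))) q hq'
    rw [List.ofFn_succ, List.prod_cons, hq]
    exact mul_dvd_mul_left _ this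
end

section
/- In the polynomial ring A[y₁,…,y_r] over a commutative ring A, the ideal (h_n(y₁), h_{n−1}(y₁,y₂), …, h_{n−r+1}(y₁,…,y_r)) generated by complete homogeneous symmetric polynomials in initial segments of the variables equals the ideal (h_n(y₁,…,y_r), h_{n−1}(y₁,…,y_r), …, h_{n−r+1}(y₁,…,y_r)) generated by complete homogeneous symmetric polynomials in all r variables. -/
open MvPolynomial

lemma hsymm_option_succ (α : Type*) [Fintype α] [DecidableEq α]
    (A : Type*) [CommRing A] (m : ℕ) :
    hsymm (Option α) A (m + 1) =
      rename (some : α → Option α) (hsymm α A (m + 1)) +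
        X none * hsymm (Option α) A m := by
  classical
  rw [hsymm, ← Equiv.sum_comp (symOptionSuccEquiv (α := α) (n := m)).symm
      (fun s : Sym (Option α) (m+1) => (Multiset.map X s.1).prod), Fintype.sum_sum_type]
  rw [add_comm]
  congr 1
  · rw [hsymm, map_sum]
    refine Finset.sum_congr rfl fun s _ => ?_
    show (Multiset.map X ((SymOptionSuccEquiv.decode (Sum.inr s) : Sym (Option α) (m+1)) :
        Multiset (Option α))).prod = _
    rw [SymOptionSuccEquiv.decode_inr, Sym.coe_map, Multiset.map_map]
    simp only [Function.comp_def, Function.Embedding.some_apply,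
      ← rename_X (some : α → Option α)]
    exact Multiset.prod_hom' _ _ _
  · rw [hsymm, Finset.mul_sum]
    refine Finset.sum_congr rfl fun s _ => ?_
    show (Multiset.map X ((SymOptionSuccEquiv.decode (Sum.inl s) : Sym (Option α) (m+1)) :
        Multiset (Option α))).prod = _
    rw [SymOptionSuccEquiv.decode_inl, Sym.coe_cons, Multiset.map_cons, Multiset.prod_cons]
    rfl

lemma hsymm_fin_succ (A : Type*) [CommRing A] (k m : ℕ) :
    hsymm (Fin (k + 1)) A (m + 1) =
      rename Fin.castSucc (hsymm (Fin k) A (m + 1)) +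
        X (Fin.last k) * hsymm (Fin (k + 1)) A m := by
  have h1 : rename (⇑(finSuccEquivLast (n := k)).symm) (hsymm (Option (Fin k)) A (m + 1))
      = hsymm (Fin (k + 1)) A (m + 1) := rename_hsymm _ _ _ _
  have h2 : rename (⇑(finSuccEquivLast (n := k)).symm) (hsymm (Option (Fin k)) A m)
      = hsymm (Fin (k + 1)) A m := rename_hsymm _ _ _ _
  rw [← h1, hsymm_option_succ, map_add, map_mul, rename_rename, rename_X,
    finSuccEquivLast_symm_none, h2,
    show (⇑(finSuccEquivLast (n := k)).symm ∘ some : Fin k → Fin (k + 1)) = Fin.castSucc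
      from _root_.funext fun i => finSuccEquivLast_symm_some i]

lemma key_lemma {A : Type*} [CommRing A] (r : ℕ) :
    ∀ d k m (hkr : k ≤ r), k + d = r →
      (rename (Fin.castLE hkr) (hsymm (Fin k) A m) : MvPolynomial (Fin r) A)
          - hsymm (Fin r) A m
        ∈ Ideal.span ((fun i => (hsymm (Fin r) A i : MvPolynomial (Fin r) A)) ''
            Set.Ico (m - d) m) := by
  intro d
  induction d with
  | zero =>
    intro k m hkr hk
    obtain rfl : k = r := by omega
    rw [show (Fin.castLE hkr) = id from _root_.funext fun i => rfl, rename_id, AlgHom.id_apply, sub_self]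
    exact Ideal.zero_mem _
  | succ d ih =>
    intro k m hkr hk
    have hk1 : k + 1 ≤ r := by omega
    cases m with
    | zero => simp
    | succ m =>
      have comp : (Fin.castLE hkr : Fin k → Fin r)
          = (Fin.castLE hk1) ∘ Fin.castSucc := funext fun i => rfl
      have hrec : rename (Fin.castLE hkr) (hsymm (Fin k) A (m + 1))
          = rename (Fin.castLE hk1) (hsymm (Fin (k + 1)) A (m + 1))
            - X (Fin.castLE hk1 (Fin.last k)) *
              rename (Fin.castLE hk1) (hsymm (Fin (k + 1)) A m) := by
        rw [comp, ← rename_rename, hsymm_fin_succ, map_add, map_mul, rename_X]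
        ring
      rw [hrec]
      have ih1 := ih (k + 1) (m + 1) hk1 (by omega)
      have ih2 := ih (k + 1) m hk1 (by omega)
      have sub1 : Set.Ico (m + 1 - d) (m + 1) ⊆ Set.Ico (m + 1 - (d + 1)) (m + 1) := by
        intro i hi; simp only [Set.mem_Ico] at *; omega
      have sub2 : Set.Ico (m - d) m ⊆ Set.Ico (m + 1 - (d + 1)) (m + 1) := by
        intro i hi; simp only [Set.mem_Ico] at *; omega
      have ih1' := Ideal.span_mono (Set.image_mono sub1) ih1
      have ih2' := Ideal.span_mono (Set.image_mono sub2) ih2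
      have hm : hsymm (Fin r) A m ∈
          Ideal.span ((fun i => (hsymm (Fin r) A i : MvPolynomial (Fin r) A)) ''
            Set.Ico (m + 1 - (d + 1)) (m + 1)) :=
        Ideal.subset_span ⟨m, by simp only [Set.mem_Ico]; omega, rfl⟩
      have heq : rename (Fin.castLE hk1) (hsymm (Fin (k + 1)) A (m + 1))
            - X (Fin.castLE hk1 (Fin.last k)) *
              rename (Fin.castLE hk1) (hsymm (Fin (k + 1)) A m)
          - hsymm (Fin r) A (m + 1)
          = (rename (Fin.castLE hk1) (hsymm (Fin (k + 1)) A (m + 1))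
              - hsymm (Fin r) A (m + 1))
            - X (Fin.castLE hk1 (Fin.last k)) *
              ((rename (Fin.castLE hk1) (hsymm (Fin (k + 1)) A m) - hsymm (Fin r) A m)
                + hsymm (Fin r) A m) := by ring
      rw [heq]
      exact sub_mem ih1' (Ideal.mul_mem_left _ _ (add_mem ih2' hm))

/-- In `A[y₁,…,y_r]`, the ideal generated by the complete homogeneous
symmetric polynomials in initial segments of the variables,
`(h_n(y₁), h_{n−1}(y₁,y₂), …, h_{n−r+1}(y₁,…,y_r))`, equals the ideal generated by the
complete homogeneous symmetric polynomials of the same degrees in all `r` variables,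
`(h_n(y₁,…,y_r), …, h_{n−r+1}(y₁,…,y_r))`.  (Here `j` ranges over `Fin r`, the
generator of index `j` having degree `n − j`.) -/
theorem stmt4 {A : Type*} [CommRing A] (n r : ℕ) (hr : 1 ≤ r) (hn : r ≤ n) :
    Ideal.span (Set.range fun j : Fin r =>
        rename (Fin.castLE j.isLt) (hsymm (Fin (j.val + 1)) A (n - j.val)))
      = Ideal.span (Set.range fun j : Fin r =>
          (hsymm (Fin r) A (n - j.val) : MvPolynomial (Fin r) A)) := by
  set g : Fin r → MvPolynomial (Fin r) A := fun j =>
    rename (Fin.castLE j.isLt) (hsymm (Fin (j.val + 1)) A (n - j.val)) with hg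
  set f : Fin r → MvPolynomial (Fin r) A := fun j =>
    hsymm (Fin r) A (n - j.val) with hf
  have hkey : ∀ j : Fin r, g j - f j ∈
      Ideal.span ((fun i => (hsymm (Fin r) A i : MvPolynomial (Fin r) A)) ''
        Set.Ico ((n - j.val) - (r - (j.val + 1))) (n - j.val)) :=
    fun j => key_lemma r (r - (j.val + 1)) (j.val + 1) (n - j.val) j.isLt (by omega)
  apply le_antisymm
  · -- span g ≤ span f
    rw [Ideal.span_le]
    rintro _ ⟨j, rfl⟩
    have h1 : Ideal.span ((fun i => (hsymm (Fin r) A i : MvPolynomial (Fin r) A)) ''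
        Set.Ico ((n - j.val) - (r - (j.val + 1))) (n - j.val))
          ≤ Ideal.span (Set.range f) := by
      rw [Ideal.span_le]
      rintro _ ⟨i, hi, rfl⟩
      simp only [Set.mem_Ico] at hi
      have hjlt := j.isLt
      refine Ideal.subset_span ⟨⟨n - i, by omega⟩, ?_⟩
      simp only [hf]
      congr 1
      omega
    have : g j = (g j - f j) + f j := by ring
    rw [this]
    exact add_mem (h1 (hkey j)) (Ideal.subset_span ⟨j, rfl⟩)
  · -- span f ≤ span g
    have main : ∀ d, ∀ j : Fin r, r - j.val ≤ d → f j ∈ Ideal.span (Set.range g) := by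
      intro d
      induction d with
      | zero => intro j hj; exact absurd hj (by have := j.isLt; omega)
      | succ d ih =>
        intro j hj
        have h1 : Ideal.span ((fun i => (hsymm (Fin r) A i : MvPolynomial (Fin r) A)) ''
            Set.Ico ((n - j.val) - (r - (j.val + 1))) (n - j.val))
              ≤ Ideal.span (Set.range g) := by
          rw [Ideal.span_le]
          rintro _ ⟨i, hi, rfl⟩
          simp only [Set.mem_Ico] at hi
          have hjlt := j.isLt
          have : (fun i => (hsymm (Fin r) A i : MvPolynomial (Fin r) A)) i
              = f ⟨n - i, by omega⟩ := by
            simp only [hf]; congr 1; omega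
          rw [this]
          exact ih ⟨n - i, by omega⟩ (by simp only; omega)
        have : f j = g j - (g j - f j) := by ring
        rw [this]
        exact sub_mem (Ideal.subset_span ⟨j, rfl⟩) (h1 (hkey j))
    rw [Ideal.span_le]
    rintro _ ⟨j, rfl⟩
    exact main r j (by omega)
end

section
/- In the quotient Λ_r/(h_{n−r+1},…,h_n) of symmetric polynomials in r variables, the image of the Schur polynomial s_λ vanishes for every partition λ of length ≤ r that does NOT fit in the r × (n−r) box (i.e., with λ₁ > n−r). -/
set_option synthInstance.maxHeartbeats 1000000
set_option maxHeartbeats 1000000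

open MvPolynomial

/-- `h_m` for an integer index `m`, equal to the complete homogeneous symmetric
polynomial for `m ≥ 0` and to `0` for `m < 0`. -/
noncomputable def hz (r : ℕ) (m : ℤ) : MvPolynomial (Fin r) ℤ :=
  if 0 ≤ m then hsymm (Fin r) ℤ m.toNat else 0

/-- The Schur polynomial of a partition `λ` with at most `r` parts (given as an
antitone function `Fin r → ℕ`), defined by the Jacobi–Trudi determinant
`s_λ = det (h_{λ_i − i + j})_{1 ≤ i,j ≤ r}`. -/
noncomputable def schur (r : ℕ) (lam : Fin r → ℕ) : MvPolynomial (Fin r) ℤ :=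
  Matrix.det (Matrix.of fun i j : Fin r => hz r ((lam i : ℤ) - (i : ℤ) + (j : ℤ)))

open Finset in
private lemma geom_series_mul {R : Type*} [CommRing R] (a : R) :
    (1 - PowerSeries.C a * PowerSeries.X) * PowerSeries.mk (fun n => a ^ n) = 1 := by
  ext n
  cases n with
  | zero => simp
  | succ n =>
    rw [sub_mul, one_mul, map_sub, mul_assoc]
    simp [PowerSeries.coeff_succ_X_mul, pow_succ']

open Finset in
private lemma coeff_prod_one_sub {R : Type*} [CommRing R] {ι : Type*} [DecidableEq ι]
    (s : Finset ι) (f : ι → R) (k : ℕ) :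
    PowerSeries.coeff k (∏ i ∈ s, (1 - PowerSeries.C (f i) * PowerSeries.X)) =
      (-1) ^ k * ∑ t ∈ s.powersetCard k, ∏ i ∈ t, f i := by
  induction s using Finset.induction_on generalizing k with
  | empty =>
    cases k with
    | zero => simp
    | succ k =>
      rw [Finset.powersetCard_eq_empty.mpr (by simp)]
      simp
  | @insert a s ha ih =>
    rw [Finset.prod_insert ha, sub_mul, one_mul, map_sub, mul_assoc]
    cases k with
    | zero =>
      simp [PowerSeries.coeff_zero_X_mul]
    | succ k =>
      rw [PowerSeries.coeff_C_mul, PowerSeries.coeff_succ_X_mul, ih, ih,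
        Finset.powersetCard_succ_insert ha, Finset.sum_union, Finset.sum_image]
      · rw [mul_add]
        have : ∀ t ∈ s.powersetCard k, ∏ i ∈ insert a t, f i = f a * ∏ i ∈ t, f i := by
          intro t ht
          have hat : a ∉ t := fun hat => ha ((Finset.mem_powersetCard.mp ht).1 hat)
          rw [Finset.prod_insert hat]
        rw [Finset.sum_congr rfl this, ← Finset.mul_sum]
        ring
      · intro t ht u hu htu
        have hat : a ∉ t := fun h => ha ((Finset.mem_powersetCard.mp ht).1 h)
        have hau : a ∉ u := fun h => ha ((Finset.mem_powersetCard.mp hu).1 h)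
        rw [← Finset.erase_insert hat, ← Finset.erase_insert hau, htu]
      · rw [Finset.disjoint_right]
        rintro t ht hmem
        rw [Finset.mem_image] at ht
        obtain ⟨u, hu, rfl⟩ := ht
        exact ha ((Finset.mem_powersetCard.mp hmem).1 (Finset.mem_insert_self a u))

open Finset in
private lemma coeff_prod_geom {R : Type*} [CommRing R] {σ : Type*} [Fintype σ] [DecidableEq σ]
    (d : ℕ) :
    PowerSeries.coeff d
        (∏ i : σ, PowerSeries.mk fun n => (X i : MvPolynomial σ R) ^ n) = hsymm σ R d := by
  rw [PowerSeries.coeff_prod]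
  simp only [PowerSeries.coeff_mk]
  rw [hsymm]
  symm
  refine Finset.sum_bij' (i := fun s _ => Multiset.toFinsupp s.1)
    (j := fun l hl => ⟨l.toMultiset, by
      rw [Finsupp.card_toMultiset]
      rw [Finset.mem_finsuppAntidiag'] at hl
      exact hl.1⟩) ?_ ?_ ?_ ?_ ?_
  · intro s _
    rw [Finset.mem_finsuppAntidiag']
    refine ⟨?_, Finset.subset_univ _⟩
    have := Finsupp.card_toMultiset (Multiset.toFinsupp s.1)
    rw [Multiset.toFinsupp_toMultiset] at this
    exact ((this.symm.trans s.2))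
  · intro l _; exact Finset.mem_univ _
  · intro s _
    exact Sym.ext (by simp)
  · intro l _
    simp
  · intro s _
    have h1 : (Multiset.map (fun i => (X i : MvPolynomial σ R)) s.1).prod
        = ∏ m ∈ s.1.toFinset, (X m : MvPolynomial σ R) ^ s.1.count m :=
      Finset.prod_multiset_map_count _ _
    rw [h1]
    refine (Finset.prod_subset (Finset.subset_univ _) ?_).trans ?_
    · intro i _ hi
      rw [Multiset.mem_toFinset] at hi
      rw [Multiset.count_eq_zero_of_notMem hi, pow_zero]
    · apply Finset.prod_congr rfl
      intro i _
      rw [Multiset.toFinsupp_apply]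

open Finset in
private lemma wronski {R : Type*} [CommRing R] {σ : Type*} [Fintype σ] [DecidableEq σ]
    (m : ℕ) (hm : 1 ≤ m) :
    ∑ ij ∈ Finset.HasAntidiagonal.antidiagonal m,
      (-1) ^ ij.1 * esymm σ R ij.1 * hsymm σ R ij.2 = 0 := by
  have hmk : PowerSeries.mk (fun n => hsymm σ R n)
      = ∏ i : σ, PowerSeries.mk fun n => (X i : MvPolynomial σ R) ^ n := by
    ext d
    rw [coeff_prod_geom, PowerSeries.coeff_mk]
  have key : (∏ i : σ, (1 - PowerSeries.C (X i : MvPolynomial σ R) * PowerSeries.X))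
      * PowerSeries.mk (fun n => hsymm σ R n) = 1 := by
    rw [hmk, ← Finset.prod_mul_distrib]
    rw [Finset.prod_congr rfl fun i _ => geom_series_mul (X i : MvPolynomial σ R)]
    exact Finset.prod_const_one
  have := congrArg (PowerSeries.coeff m) key
  rw [PowerSeries.coeff_mul] at this
  rw [PowerSeries.coeff_one, if_neg (by omega)] at this
  rw [← this]
  apply Finset.sum_congr rfl
  rintro ⟨i, j⟩ hij
  rw [coeff_prod_one_sub, PowerSeries.coeff_mk, esymm]

open Finset in
private lemma det_mem_of_row {S : Type*} [CommRing S] {m : ℕ} (M : Matrix (Fin m) (Fin m) S)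
    (J : Ideal S) (i₀ : Fin m) (h : ∀ j, M i₀ j ∈ J) : M.det ∈ J := by
  rw [Matrix.det_apply]
  apply Ideal.sum_mem
  intro σ _
  have hprod : ∏ i, M (σ i) i ∈ J := by
    rw [← Finset.prod_erase_mul _ _ (Finset.mem_univ (σ⁻¹ i₀))]
    apply Ideal.mul_mem_left
    have hs : σ (σ⁻¹ i₀) = i₀ := Equiv.apply_symm_apply σ i₀
    rw [hs]
    exact h _
  rw [Units.smul_def]
  exact zsmul_mem hprod _

private lemma hz_isSymmetric (r : ℕ) (m : ℤ) : (hz r m).IsSymmetric := by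
  unfold hz
  split
  · exact hsymm_isSymmetric _ _ _
  · intro e; simp

open Finset in
private lemma hS_mem (n r : ℕ) (hr : 1 ≤ r) (hn : r ≤ n) (M : ℕ) :
    n - r + 1 ≤ M →
    (⟨hsymm (Fin r) ℤ M, hsymm_isSymmetric (Fin r) ℤ M⟩ : symmetricSubalgebra (Fin r) ℤ) ∈
      Ideal.span (Set.range fun k : Fin r =>
        (⟨hsymm (Fin r) ℤ (n - k.val), hsymm_isSymmetric (Fin r) ℤ _⟩ :
          symmetricSubalgebra (Fin r) ℤ)) := by
  induction M using Nat.strong_induction_on with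
  | _ M ih =>
  intro hM
  by_cases hMn : M ≤ n
  · apply Ideal.subset_span
    refine ⟨⟨n - M, by omega⟩, ?_⟩
    have h : n - (n - M) = M := by omega
    simp only [h]
  · have hlift : ∑ ij ∈ Finset.HasAntidiagonal.antidiagonal M,
        ((-1 : symmetricSubalgebra (Fin r) ℤ)) ^ ij.1
          * ⟨esymm (Fin r) ℤ ij.1, esymm_isSymmetric (Fin r) ℤ ij.1⟩
          * ⟨hsymm (Fin r) ℤ ij.2, hsymm_isSymmetric (Fin r) ℤ ij.2⟩ = 0 := by
      refine Subtype.ext ?_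
      push_cast
      exact wronski M (by omega)
    have h0M : ((0 : ℕ), M) ∈ Finset.HasAntidiagonal.antidiagonal M := by simp
    rw [← Finset.add_sum_erase _ _ h0M] at hlift
    have h0 : ((-1 : symmetricSubalgebra (Fin r) ℤ)) ^ (0:ℕ)
          * ⟨esymm (Fin r) ℤ 0, esymm_isSymmetric (Fin r) ℤ 0⟩
          * ⟨hsymm (Fin r) ℤ M, hsymm_isSymmetric (Fin r) ℤ M⟩
        = (⟨hsymm (Fin r) ℤ M, hsymm_isSymmetric (Fin r) ℤ M⟩ :
            symmetricSubalgebra (Fin r) ℤ) := by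
      refine Subtype.ext ?_
      push_cast
      simp [esymm_zero]
    rw [h0] at hlift
    rw [eq_neg_of_add_eq_zero_left hlift]
    apply neg_mem
    apply Ideal.sum_mem
    rintro ⟨i, j⟩ hij
    rw [Finset.mem_erase, Finset.HasAntidiagonal.mem_antidiagonal] at hij
    obtain ⟨hne, hsum⟩ := hij
    have hi1 : 1 ≤ i := by
      rcases Nat.eq_zero_or_pos i with h | h
      · exfalso; apply hne; subst h; simp at hsum ⊢; omega
      · exact h
    by_cases hir : i ≤ r
    · exact Ideal.mul_mem_left _ _ (ih j (by omega) (by omega))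
    · have hz : (⟨esymm (Fin r) ℤ i, esymm_isSymmetric (Fin r) ℤ i⟩ :
          symmetricSubalgebra (Fin r) ℤ) = 0 := by
        refine Subtype.ext ?_
        show esymm (Fin r) ℤ i = 0
        rw [esymm, Finset.powersetCard_eq_empty.mpr (by simpa using by omega : (univ : Finset (Fin r)).card < i),
          Finset.sum_empty]
      rw [hz, mul_zero, zero_mul]
      exact Ideal.zero_mem _

/-- In the quotient `Λ_r/(h_{n−r+1},…,h_n)` of the ring of symmetric
polynomials in `r` variables, the image of the Schur polynomial `s_λ` vanishes for
every partition `λ` with at most `r` parts that does not fit in the `r × (n−r)` box,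
i.e., with largest part `λ₁ > n − r`. -/

theorem stmt7 (n r : ℕ) (hr : 1 ≤ r) (hn : r ≤ n)
    (lam : Fin r → ℕ) (hanti : Antitone lam)
    (hbig : n - r < lam ⟨0, hr⟩)
    (p : symmetricSubalgebra (Fin r) ℤ)
    (hp : (p : MvPolynomial (Fin r) ℤ) = schur r lam) :
    Ideal.Quotient.mk
      (Ideal.span (Set.range fun k : Fin r =>
        (⟨hsymm (Fin r) ℤ (n - k.val), hsymm_isSymmetric (Fin r) ℤ _⟩ :
          symmetricSubalgebra (Fin r) ℤ))) p = 0 := by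
  rw [Ideal.Quotient.eq_zero_iff_mem]
  set Mat : Matrix (Fin r) (Fin r) (symmetricSubalgebra (Fin r) ℤ) :=
    Matrix.of (fun i j : Fin r =>
      (⟨hz r ((lam i : ℤ) - (i : ℤ) + (j : ℤ)), hz_isSymmetric r _⟩ :
        symmetricSubalgebra (Fin r) ℤ)) with hMat
  have hdet : ((Mat.det : symmetricSubalgebra (Fin r) ℤ) : MvPolynomial (Fin r) ℤ)
      = schur r lam := by
    rw [schur]
    exact RingHom.map_det ((symmetricSubalgebra (Fin r) ℤ).val.toRingHom) Mat
  have hpd : p = Mat.det := Subtype.coe_injective (hp.trans hdet.symm)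
  rw [hpd]
  apply det_mem_of_row Mat _ ⟨0, hr⟩
  intro j
  have hM : ((lam ⟨0, hr⟩ : ℤ) - ((⟨0, hr⟩ : Fin r) : ℤ) + (j : ℤ))
      = ((lam ⟨0, hr⟩ + (j : ℕ) : ℕ) : ℤ) := by
    simp only [Fin.val_mk]
    push_cast
    ring
  have hMj : Mat ⟨0, hr⟩ j
      = ⟨hsymm (Fin r) ℤ (lam ⟨0, hr⟩ + (j : ℕ)),
          hsymm_isSymmetric (Fin r) ℤ _⟩ := by
    apply Subtype.ext
    show hz r ((lam ⟨0, hr⟩ : ℤ) - ((⟨0, hr⟩ : Fin r) : ℤ) + (j : ℤ))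
        = hsymm (Fin r) ℤ (lam ⟨0, hr⟩ + (j : ℕ))
    rw [hM]
    unfold hz
    rw [if_pos (by positivity), Int.toNat_natCast]
  rw [hMj]
  exact hS_mem n r hr hn _ (by omega)
end

section
/- Let A be a commutative ring and consider the power series ring A[[y₁,…,y_r]]. For i ≠ j the element yᵢ − yⱼ is not a zero divisor in A[[y₁,…,y_r]]. -/
/-- Let `A` be a commutative ring.  In the formal power series ring
`A[[y₁,…,y_r]]`, the element `yᵢ − yⱼ` is a non-zero-divisor for `i ≠ j`. -/
theorem stmt14 {A : Type*} [CommRing A] (r : ℕ) (i j : Fin r) (hij : i ≠ j) :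
    (MvPowerSeries.X i - MvPowerSeries.X j : MvPowerSeries (Fin r) A)
      ∈ nonZeroDivisors (MvPowerSeries (Fin r) A) := by
  rw [mem_nonZeroDivisors_iff_right]
  intro f hf
  have heq : f * MvPowerSeries.X i = f * MvPowerSeries.X j := by
    rw [mul_sub] at hf
    exact sub_eq_zero.mp hf
  have hcoeff : ∀ m : Fin r →₀ ℕ,
      MvPowerSeries.coeff m (f * MvPowerSeries.X i)
        = MvPowerSeries.coeff m (f * MvPowerSeries.X j) := fun m => by rw [heq]
  have key : ∀ n : ℕ, ∀ d : Fin r →₀ ℕ, d j = n → MvPowerSeries.coeff d f = 0 := by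
    intro n
    induction n with
    | zero =>
      intro d hd
      have h1 : MvPowerSeries.coeff (d + Finsupp.single i 1) (f * MvPowerSeries.X i)
          = MvPowerSeries.coeff d f := by
        rw [MvPowerSeries.X_def, MvPowerSeries.coeff_add_mul_monomial, mul_one]
      have h2 : MvPowerSeries.coeff (d + Finsupp.single i 1) (f * MvPowerSeries.X j)
          = 0 := by
        rw [MvPowerSeries.X_def, MvPowerSeries.coeff_mul_monomial, if_neg]
        intro hle
        have := hle j
        simp only [Finsupp.coe_add, Pi.add_apply, Finsupp.single_apply, if_pos rfl,
          if_neg hij, hd, if_true] at this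
        omega
      rw [← h1, hcoeff, h2]
    | succ n ih =>
      intro d hd
      have h1 : MvPowerSeries.coeff (d + Finsupp.single i 1) (f * MvPowerSeries.X i)
          = MvPowerSeries.coeff d f := by
        rw [MvPowerSeries.X_def, MvPowerSeries.coeff_add_mul_monomial, mul_one]
      have hle : Finsupp.single j 1 ≤ d + Finsupp.single i 1 := by
        intro s
        simp only [Finsupp.coe_add, Pi.add_apply, Finsupp.single_apply]
        rcases eq_or_ne j s with rfl | hs
        · simp only [if_pos rfl, if_true, hd]
          exact le_trans (Nat.succ_le_succ n.zero_le) (Nat.le_add_right _ _)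
        · simp [hs]
      have h2 : MvPowerSeries.coeff (d + Finsupp.single i 1) (f * MvPowerSeries.X j)
          = MvPowerSeries.coeff (d + Finsupp.single i 1 - Finsupp.single j 1) f := by
        rw [MvPowerSeries.X_def, MvPowerSeries.coeff_mul_monomial, if_pos hle, mul_one]
      have hj' : ((d + Finsupp.single i 1 - Finsupp.single j 1 : Fin r →₀ ℕ)) j = n := by
        simp only [Finsupp.tsub_apply, Finsupp.coe_add, Pi.add_apply, Finsupp.single_apply,
          if_pos rfl, if_neg hij, hd, if_true]
        omega
      rw [← h1, hcoeff, h2, ih _ hj']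
  ext d
  simpa using key (d j) d rfl
end
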